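/- arXiv:2310.01609 — 4 statements merged into one kernel-verified Lean document; each statement's English description precedes it below -/
import Mathlib

section
/- Let Σ be a positive continuous linear operator on H with Σ ≼ I, and let M ≥ 1 and m ≥ 0 be natural numbers. Then ∑_{i=1}^∞ ⟨e_i, (I − (I − Σ)^M) e_i⟩ ≤ m + M · ∑_{i=m+1}^∞ ⟨e_i, Σ e_i⟩, where both sums have nonnegative terms (and are interpreted in [0, ∞]). -/
open MeasureTheory RealInnerProductSpace
open scoped ENNReal

/-- `Hl2` is the real Hilbert space `ℓ²` of square-summable real sequences. -/
noncomputable abbrev Hl2 : Type := lp (fun _ : ℕ => ℝ) 2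

/-- `e i` is the `i`-th canonical basis vector of `ℓ²` (indexed from `0`). -/
noncomputable def e (i : ℕ) : Hl2 := lp.single 2 i 1

/-!
Put `A = 1 - Σ`, a positive operator. Then `1 - A ^ M = ∑_{k < M} A ^ k (1 - A)`, and
`k ↦ ⟪x, A ^ k (1 - A) x⟫` is antitone because consecutive terms differ by
`⟪(1 - A) x, A ^ k (1 - A) x⟫ ≥ 0`; hence `⟪x, (1 - A ^ M) x⟫ ≤ M ⟪x, Σ x⟫`.
Since `A ^ M` is positive we also have `⟪x, (1 - A ^ M) x⟫ ≤ ‖x‖ ^ 2`.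
Use the second bound on the first `m` basis vectors and the first bound on the rest.
-/

namespace ContinuousLinearMap

section RCLike

variable {𝕜 E : Type*} [RCLike 𝕜] [NormedAddCommGroup E] [InnerProductSpace 𝕜 E] [CompleteSpace E]

theorem IsPositive.pow {A : E →L[𝕜] E} (hA : A.IsPositive) (n : ℕ) : (A ^ n).IsPositive := by
  obtain ⟨k, rfl | rfl⟩ := Nat.even_or_odd' n
  · convert isPositive_one.adjoint_conj (A ^ k) using 1
    rw [(hA.isSelfAdjoint.pow k).adjoint_eq, ← mul_def, ← mul_def, one_mul, two_mul, pow_add]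
  · convert hA.adjoint_conj (A ^ k) using 1
    rw [(hA.isSelfAdjoint.pow k).adjoint_eq, ← mul_def, ← mul_def, two_mul, add_assoc, pow_add,
      pow_succ']

end RCLike

variable {E : Type*} [NormedAddCommGroup E] [InnerProductSpace ℝ E] {A : E →L[ℝ] E}

theorem IsPositive.inner_one_sub_le_norm_sq (hA : A.IsPositive) (x : E) :
    ⟪x, (1 - A) x⟫ ≤ ‖x‖ ^ 2 := by
  rw [sub_apply, inner_sub_right, one_apply_eq_self, real_inner_self_eq_norm_sq]
  linarith [hA.inner_nonneg_right x]

variable [CompleteSpace E]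

theorem IsPositive.antitone_inner_pow_mul_one_sub (hA : A.IsPositive) (x : E) :
    Antitone fun k : ℕ => ⟪x, (A ^ k * (1 - A)) x⟫ := by
  refine antitone_nat_of_succ_le fun k => ?_
  have hdiff : (A ^ k * (1 - A) - A ^ (k + 1) * (1 - A)).IsPositive := by
    have hsa : adjoint (1 - A) = 1 - A :=
      ((IsSelfAdjoint.one _).sub hA.isSelfAdjoint).adjoint_eq
    have hcomm : Commute (1 - A) (A ^ k) :=
      ((Commute.one_left A).sub_left (.refl A)).pow_right k
    convert (hA.pow k).adjoint_conj (1 - A) using 1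
    rw [hsa, ← mul_def, ← mul_def, ← sub_mul, pow_succ, ← mul_one_sub, ← mul_assoc, hcomm.eq]
  have := hdiff.inner_nonneg_right x
  rw [sub_apply, inner_sub_right] at this
  linarith

theorem IsPositive.inner_one_sub_pow_le (hA : A.IsPositive) (x : E) (n : ℕ) :
    ⟪x, (1 - A ^ n) x⟫ ≤ n * ⟪x, (1 - A) x⟫ := by
  have hsum : ⟪x, (1 - A ^ n) x⟫ = ∑ k ∈ Finset.range n, ⟪x, (A ^ k * (1 - A)) x⟫ := by
    rw [← geom_sum_mul_neg, Finset.sum_mul, sum_apply, inner_sum]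
  rw [hsum]
  refine (Finset.sum_le_card_nsmul _ _ _ fun k _ =>
    hA.antitone_inner_pow_mul_one_sub x (Nat.zero_le k)).trans_eq ?_
  simp only [Finset.card_range, nsmul_eq_mul, pow_zero, one_mul]

end ContinuousLinearMap

theorem ENNReal.tsum_le_add_tsum_nat_add_of_le_one {f g : ℕ → ℝ≥0∞} (hf : ∀ i, f i ≤ 1)
    (hfg : ∀ i, f i ≤ g i) (m : ℕ) : ∑' i, f i ≤ m + ∑' i, g (m + i) := by
  rw [← ENNReal.summable.sum_add_tsum_nat_add' (k := m)]
  gcongr ?_ + ?_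
  · simpa using Finset.sum_le_card_nsmul (Finset.range m) f 1 fun i _ => hf i
  · exact ENNReal.tsum_le_tsum fun i => add_comm m i ▸ hfg (i + m)

theorem norm_e (i : ℕ) : ‖e i‖ = 1 := by
  simp [e]

theorem trace_effective_dimension_bound_general
    (Cov : Hl2 →L[ℝ] Hl2) (hle : (1 - Cov).IsPositive)
    (M : ℕ) (m : ℕ) :
    ∑' i : ℕ, ENNReal.ofReal ⟪e i, (1 - (1 - Cov) ^ M) (e i)⟫ ≤
      (m : ℝ≥0∞) + (M : ℝ≥0∞) * ∑' i : ℕ, ENNReal.ofReal ⟪e (m + i), Cov (e (m + i))⟫ := by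
  rw [← ENNReal.tsum_mul_left]
  refine ENNReal.tsum_le_add_tsum_nat_add_of_le_one
    (g := fun i => M * ENNReal.ofReal ⟪e i, Cov (e i)⟫) (fun i => ?_) (fun i => ?_) m
  · rw [ENNReal.ofReal_le_one]
    simpa [norm_e] using (hle.pow M).inner_one_sub_le_norm_sq (e i)
  · rw [← ENNReal.ofReal_natCast, ← ENNReal.ofReal_mul (Nat.cast_nonneg M)]
    exact ENNReal.ofReal_le_ofReal (by simpa using hle.inner_one_sub_pow_le (e i) M)

/-- **Effective dimension bound (deterministic core of Lemma 1).**
Let `Cov` be a positive continuous linear operator on `ℓ²` with `Cov ≼ I`, and let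
`M ≥ 1`, `m ≥ 0` be natural numbers. Then the trace
`∑_{i} ⟪e i, (I - (I - Cov) ^ M) (e i)⟫` is at most
`m + M * ∑_{i ≥ m} ⟪e i, Cov (e i)⟫`, where all terms are nonnegative and the sums are
interpreted in `[0, ∞]` (the tail sum skips the first `m` basis vectors). -/
theorem trace_effective_dimension_bound
    (Cov : Hl2 →L[ℝ] Hl2) (hpos : Cov.IsPositive) (hle : (1 - Cov).IsPositive)
    (M : ℕ) (hM : 1 ≤ M) (m : ℕ) :
    ∑' i : ℕ, ENNReal.ofReal ⟪e i, (1 - (1 - Cov) ^ M) (e i)⟫ ≤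
      (m : ℝ≥0∞) + (M : ℝ≥0∞) * ∑' i : ℕ, ENNReal.ofReal ⟪e (m + i), Cov (e (m + i))⟫ :=
  trace_effective_dimension_bound_general Cov hle M m
end

section
/- Let M ≥ 1, and let B_1, …, B_M be mutually independent operator-valued random variables on Ω such that almost surely each B_j is self-adjoint with 0 ≼ B_j ≼ I, and E[B_j] = Σ for every j. Then for each k with 1 ≤ k ≤ M one has E[∏_{j=1}^k (I − B_j)] = (I − Σ)^k, and consequently the KGR operator Σ̂⁺ = I + ∑_{k=1}^M ∏_{j=1}^k (I − B_j) satisfies E[Σ̂⁺] = ∑_{k=0}^M (I − Σ)^k and E[Σ̂⁺]·Σ = I − (I − Σ)^{M+1}. -/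
/-!
Write `P k = (I - B 0) ⋯ (I - B (k - 1))`. Since `P k` is a function of `B 0, …, B (k - 1)`, it is
independent of `I - B k`, so `E[P (k + 1)] = E[P k] E[I - B k] = E[P k] (I - Σ)` and induction gives
`E[P k] = (I - Σ) ^ k`; the bounds `0 ≼ B j ≼ I` force `‖B j‖ ≤ 1`, which makes every
factor integrable. The statements about `Σ̂⁺` are then a geometric sum.

The operator algebra is not separable, so a product of measurable operator-valued maps need not be
measurable; independence of `P k` from `B k` is therefore proved for strongly measurable versions
of the `B j` (which are separably valued) and transported back along almost-everywhere equalities.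
-/

open MeasureTheory ProbabilityTheory RealInnerProductSpace

/-- The KGR operator `Σ̂⁺ = I + ∑_{k=1}^M ∏_{j=1}^k (I - B j)`, where the
(non-commutative) product is taken left-to-right in increasing order of `j`
(indices shifted so that `B 0, …, B (M-1)` play the roles of `B_1, …, B_M`). -/
noncomputable def kgrOp (B : ℕ → Hl2 →L[ℝ] Hl2) (M : ℕ) : Hl2 →L[ℝ] Hl2 :=
  1 + ∑ k ∈ Finset.range M, ((List.range (k + 1)).map (fun j => 1 - B j)).prod

namespace ContinuousLinearMap

variable {𝕜 E : Type*} [RCLike 𝕜] [NormedAddCommGroup E] [InnerProductSpace 𝕜 E]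

theorem norm_le_one_of_isPositive_of_isPositive_one_sub {T : E →L[𝕜] E}
    (h₀ : T.IsPositive) (h₁ : (1 - T).IsPositive) : ‖T‖ ≤ 1 := by
  rw [T.norm_eq_iSup_rayleighQuotient h₀.isSymmetric]
  refine ciSup_le fun x => ?_
  have hle : T.reApplyInnerSelf x ≤ ‖x‖ ^ 2 := by
    have := h₁.2 x
    simp only [reApplyInnerSelf_apply, sub_apply, one_apply_eq_self, inner_sub_left,
      map_sub, inner_self_eq_norm_sq] at this ⊢
    linarith
  rw [rayleighQuotient, abs_of_nonneg (div_nonneg (h₀.2 x) (by positivity))]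
  exact div_le_one_of_le₀ hle (by positivity)

end ContinuousLinearMap

section PartialProd

variable {Ω A : Type*} {mΩ : MeasurableSpace Ω} {μ : Measure Ω}

def partialProd [Monoid A] (X : ℕ → Ω → A) (k : ℕ) (ω : Ω) : A :=
  ((List.range k).map (X · ω)).prod

section Monoid

variable [Monoid A] {X : ℕ → Ω → A} {k : ℕ}

@[simp]
theorem partialProd_zero : partialProd X 0 = 1 := rfl

theorem partialProd_succ : partialProd X (k + 1) = partialProd X k * X k := by
  ext ω
  simp [partialProd, List.range_succ]

theorem partialProd_ae_eq {Y : ℕ → Ω → A} (h : ∀ j < k, X j =ᵐ[μ] Y j) :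
    partialProd X k =ᵐ[μ] partialProd Y k := by
  induction k with
  | zero => rfl
  | succ k ih =>
    rw [partialProd_succ, partialProd_succ]
    exact (ih fun j hj => h j (by omega)).mul (h k k.lt_succ_self)

variable [TopologicalSpace A] [ContinuousMul A]

theorem stronglyMeasurable_partialProd {m : MeasurableSpace Ω}
    (hX : ∀ j < k, StronglyMeasurable[m] (X j)) : StronglyMeasurable[m] (partialProd X k) := by
  induction k with
  | zero => exact stronglyMeasurable_const
  | succ k ih =>
    rw [partialProd_succ]
    exact (ih fun j hj => hX j (by omega)).mul (hX k k.lt_succ_self)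

variable [TopologicalSpace.PseudoMetrizableSpace A] [MeasurableSpace A] [BorelSpace A] {M : ℕ}

theorem indepFun_partialProd_of_stronglyMeasurable (hX : ∀ j, StronglyMeasurable (X j))
    (hind : iIndepFun (fun j : Fin M => X j) μ) (hk : k < M) :
    IndepFun (partialProd X k) (X k) μ := by
  let S : Finset (Fin M) := Finset.univ.filter fun i => (i : ℕ) < k
  let last : Fin M := ⟨k, hk⟩
  have hdisj : Disjoint S {last} := by simp [S, last]
  have hind' := (hind.indepFun_finset S {last} hdisj fun i => (hX i).measurable).comp
    measurable_id (measurable_pi_apply ⟨last, Finset.mem_singleton_self last⟩)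
  rw [IndepFun_iff_Indep] at hind' ⊢
  refine indep_of_indep_of_le_left hind' (measurable_iff_comap_le.1 ?_)
  refine (stronglyMeasurable_partialProd fun j hj => ?_).measurable
  have hjS : (⟨j, hj.trans hk⟩ : Fin M) ∈ S := by simp [S, hj]
  exact stronglyMeasurable_iff_measurable_separable.2
    ⟨(measurable_pi_apply (⟨_, hjS⟩ : S)).comp (comap_measurable fun ω (i : S) => X i ω),
      (hX j).isSeparable_range⟩

theorem indepFun_partialProd (hX : ∀ j < M, AEStronglyMeasurable (X j) μ)
    (hind : iIndepFun (fun j : Fin M => X j) μ) (hk : k < M) :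
    IndepFun (partialProd X k) (X k) μ := by
  let Y : ℕ → Ω → A := fun j => if h : j < M then (hX j h).mk (X j) else 1
  have hY : ∀ j, StronglyMeasurable (Y j) := fun j => by
    by_cases h : j < M
    · simpa [Y, h] using (hX j h).stronglyMeasurable_mk
    · simpa [Y, h] using stronglyMeasurable_one
  have hXY : ∀ j < M, X j =ᵐ[μ] Y j := fun j hj => by simpa [Y, hj] using (hX j hj).ae_eq_mk
  exact (indepFun_partialProd_of_stronglyMeasurable hY (hind.congr fun j => hXY j j.2) hk).congr
    (partialProd_ae_eq fun j hj => hXY j (hj.trans hk)).symm (hXY k hk).symm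

end Monoid

section BanachAlgebra

variable [NormedRing A] [NormedAlgebra ℝ A] [MeasurableSpace A] [BorelSpace A]
  {X : ℕ → Ω → A} {M k : ℕ}

theorem integrable_partialProd (hX : ∀ j < M, Integrable (X j) μ)
    (hind : iIndepFun (fun j : Fin M => X j) μ) (hk : k ≤ M) :
    Integrable (partialProd X k) μ := by
  induction k with
  | zero =>
    have := hind.isProbabilityMeasure
    exact integrable_const 1
  | succ k ih =>
    rw [partialProd_succ]
    exact (indepFun_partialProd (fun j hj => (hX j hj).1) hind hk).integrable_bilin
      (ih (by omega)) (hX k hk) (ContinuousLinearMap.mul ℝ A)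

theorem integral_partialProd_of_integral_eq [CompleteSpace A] (hX : ∀ j < M, Integrable (X j) μ)
    (hind : iIndepFun (fun j : Fin M => X j) μ) {C : A} (hC : ∀ j < M, ∫ ω, X j ω ∂μ = C)
    (hk : k ≤ M) : ∫ ω, partialProd X k ω ∂μ = C ^ k := by
  induction k with
  | zero =>
    have := hind.isProbabilityMeasure
    simp
  | succ k ih =>
    rw [partialProd_succ, pow_succ, ← ih (by omega), ← hC k hk]
    exact (indepFun_partialProd (fun j hj => (hX j hj).1) hind hk).integral_bilin
      (integrable_partialProd hX hind (by omega)) (hX k hk) (ContinuousLinearMap.mul ℝ A)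

theorem integral_one_add_sum_partialProd [CompleteSpace A] (hX : ∀ j < M, Integrable (X j) μ)
    (hind : iIndepFun (fun j : Fin M => X j) μ) {C : A} (hC : ∀ j < M, ∫ ω, X j ω ∂μ = C) :
    ∫ ω, 1 + ∑ k ∈ Finset.range M, partialProd X (k + 1) ω ∂μ =
      ∑ k ∈ Finset.range (M + 1), C ^ k := by
  have := hind.isProbabilityMeasure
  have hterm : ∀ k ∈ Finset.range M, Integrable (partialProd X (k + 1)) μ := fun k hk =>
    integrable_partialProd hX hind (Finset.mem_range.1 hk)
  rw [integral_add (integrable_const 1) (integrable_finsetSum _ hterm),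
    integral_finsetSum _ hterm, integral_const, probReal_univ, one_smul,
    Finset.sum_range_succ', pow_zero, add_comm]
  exact congrArg (· + 1) (Finset.sum_congr rfl fun k hk =>
    integral_partialProd_of_integral_eq hX hind hC (Finset.mem_range.1 hk))

end BanachAlgebra

end PartialProd

theorem kgr_expectation_identity_general
    {Ω : Type} [MeasureSpace Ω] [IsProbabilityMeasure (ℙ : Measure Ω)]
    [MeasurableSpace (Hl2 →L[ℝ] Hl2)] [BorelSpace (Hl2 →L[ℝ] Hl2)]
    (M : ℕ)
    (B : ℕ → Ω → Hl2 →L[ℝ] Hl2)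
    (hBsm : ∀ j < M, AEStronglyMeasurable (B j) ℙ)
    (hBindep : iIndepFun (fun j : Fin M => B j) ℙ)
    (Cov : Hl2 →L[ℝ] Hl2)
    (hBpos : ∀ j < M, ∀ᵐ ω ∂ℙ, (B j ω).IsPositive ∧ (1 - B j ω).IsPositive)
    (hBmean : ∀ j < M, ∫ ω, B j ω ∂ℙ = Cov) :
    (∀ k : ℕ, 1 ≤ k → k ≤ M →
      ∫ ω, ((List.range k).map (fun j => 1 - B j ω)).prod ∂ℙ = (1 - Cov) ^ k) ∧
    (∫ ω, kgrOp (fun j => B j ω) M ∂ℙ = ∑ k ∈ Finset.range (M + 1), (1 - Cov) ^ k) ∧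
    ((∫ ω, kgrOp (fun j => B j ω) M ∂ℙ) ∘L Cov = 1 - (1 - Cov) ^ (M + 1)) := by
  let X : ℕ → Ω → Hl2 →L[ℝ] Hl2 := fun j ω => 1 - B j ω
  have hBint : ∀ j < M, Integrable (B j) ℙ := fun j hj =>
    .of_bound (hBsm j hj) 1 ((hBpos j hj).mono fun _ h =>
      ContinuousLinearMap.norm_le_one_of_isPositive_of_isPositive_one_sub h.1 h.2)
  have hXint : ∀ j < M, Integrable (X j) ℙ := fun j hj => (integrable_const 1).sub (hBint j hj)
  have hXmean : ∀ j < M, ∫ ω, X j ω ∂ℙ = 1 - Cov := fun j hj => by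
    simp only [X, integral_sub (integrable_const 1) (hBint j hj), hBmean j hj, integral_const,
      probReal_univ, one_smul]
  have hXindep : iIndepFun (fun j : Fin M => X j) ℙ :=
    hBindep.comp (fun _ T => 1 - T) fun _ => (continuous_const.sub continuous_id).measurable
  have hkgr : ∫ ω, kgrOp (fun j => B j ω) M ∂ℙ = ∑ k ∈ Finset.range (M + 1), (1 - Cov) ^ k :=
    integral_one_add_sum_partialProd hXint hXindep hXmean
  refine ⟨fun k _ hk => integral_partialProd_of_integral_eq hXint hXindep hXmean hk, hkgr, ?_⟩
  rw [hkgr, ← ContinuousLinearMap.mul_def]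
  simpa using geom_sum_mul_neg (1 - Cov) (M + 1)

/-- **Expectation identity for the KGR operator.**
Let `B 0, …, B (M-1)` be mutually independent operator-valued random variables, each
almost surely self-adjoint with `0 ≼ B j ≼ I`, and with common mean `E[B j] = Cov`.
Then `E[∏_{j=1}^k (I - B j)] = (I - Cov) ^ k` for each `1 ≤ k ≤ M`, and consequently the
KGR operator `Σ̂⁺ = I + ∑_{k=1}^M ∏_{j=1}^k (I - B j)` satisfies
`E[Σ̂⁺] = ∑_{k=0}^M (I - Cov) ^ k` and `E[Σ̂⁺] ∘ Cov = I - (I - Cov) ^ (M + 1)`. -/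
theorem kgr_expectation_identity
    {Ω : Type} [MeasureSpace Ω] [IsProbabilityMeasure (ℙ : Measure Ω)]
    [MeasurableSpace (Hl2 →L[ℝ] Hl2)] [BorelSpace (Hl2 →L[ℝ] Hl2)]
    (M : ℕ) (hM : 1 ≤ M)
    (B : ℕ → Ω → Hl2 →L[ℝ] Hl2)
    (hBmeas : ∀ j < M, Measurable (B j))
    (hBsm : ∀ j < M, AEStronglyMeasurable (B j) ℙ)
    (hBindep : iIndepFun (fun j : Fin M => B j) ℙ)
    (Cov : Hl2 →L[ℝ] Hl2)
    (hBpos : ∀ j < M, ∀ᵐ ω ∂ℙ, (B j ω).IsPositive ∧ (1 - B j ω).IsPositive)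
    (hBmean : ∀ j < M, ∫ ω, B j ω ∂ℙ = Cov) :
    (∀ k : ℕ, 1 ≤ k → k ≤ M →
      ∫ ω, ((List.range k).map (fun j => 1 - B j ω)).prod ∂ℙ = (1 - Cov) ^ k) ∧
    (∫ ω, kgrOp (fun j => B j ω) M ∂ℙ = ∑ k ∈ Finset.range (M + 1), (1 - Cov) ^ k) ∧
    ((∫ ω, kgrOp (fun j => B j ω) M ∂ℙ) ∘L Cov = 1 - (1 - Cov) ^ (M + 1)) :=
  kgr_expectation_identity_general M B hBsm hBindep Cov hBpos hBmean
end

section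
/- Let Σ be a positive continuous linear operator on H with Σ ≼ I, let M ≥ 0 be a natural number, let β > 0, and let x, f ∈ H with ‖f‖ ≤ 1. Then |⟨x, (I − Σ)^{M+1} f⟩| ≤ β·∑_{i=0}^{M} ⟨x, (I − Σ)^i x⟩ + 1/(β·(M + 1)). -/
open RealInnerProductSpace

section Aux

variable {E : Type*} [NormedAddCommGroup E] [InnerProductSpace ℝ E] [CompleteSpace E]

lemma my_inner_nonneg {T : E →L[ℝ] E} (hT : T.IsPositive) (y : E) : (0:ℝ) ≤ ⟪y, T y⟫ := by
  have := hT.inner_nonneg_right y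
  simpa using this

lemma my_symm {T : E →L[ℝ] E} (hT : IsSelfAdjoint T) (u v : E) : ⟪T u, v⟫ = ⟪u, T v⟫ :=
  hT.isSymmetric u v

/-- Cauchy–Schwarz for the semi-inner product induced by a positive operator. -/
lemma isPositive_inner_sq_le (T : E →L[ℝ] E) (hT : T.IsPositive) (u v : E) :
    ⟪u, T v⟫ ^ 2 ≤ ⟪u, T u⟫ * ⟪v, T v⟫ := by
  have key : ∀ t : ℝ, 0 ≤ ⟪v, T v⟫ * (t * t) + (2 * ⟪u, T v⟫) * t + ⟪u, T u⟫ := by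
    intro t
    have h0 := my_inner_nonneg hT (u + t • v)
    have hvu : ⟪v, T u⟫ = ⟪u, T v⟫ := by
      rw [← my_symm hT.isSelfAdjoint v u, real_inner_comm]
    simp only [map_add, map_smul, inner_add_left, inner_add_right, real_inner_smul_left,
      real_inner_smul_right] at h0
    rw [hvu] at h0
    ring_nf at h0 ⊢
    linarith [h0]
  have h := discrim_le_zero key
  rw [discrim] at h
  nlinarith [h]

lemma le_one_inner {T : E →L[ℝ] E} (hle : (1 - T).IsPositive) (y : E) :
    ⟪y, T y⟫ ≤ ⟪y, y⟫ := by
  have := my_inner_nonneg hle y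
  simp only [ContinuousLinearMap.sub_apply, ContinuousLinearMap.one_apply,
    inner_sub_right] at this
  linarith

lemma norm_apply_sq_le (T : E →L[ℝ] E) (hT : T.IsPositive) (hle : (1 - T).IsPositive)
    (y : E) : ‖T y‖ ^ 2 ≤ ⟪y, T y⟫ := by
  have h1 : ⟪T y, T (T y)⟫ ≤ ‖T y‖ ^ 2 := by
    have := le_one_inner hle (T y)
    rwa [real_inner_self_eq_norm_sq] at this
  have h2 := isPositive_inner_sq_le T hT y (T y)
  have h3 : ⟪y, T (T y)⟫ = ‖T y‖ ^ 2 := by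
    rw [← my_symm hT.isSelfAdjoint y (T y), real_inner_self_eq_norm_sq]
  rw [h3] at h2
  have h4 : 0 ≤ ⟪y, T y⟫ := my_inner_nonneg hT y
  have h5 : (0 : ℝ) ≤ ‖T y‖ ^ 2 := sq_nonneg _
  rcases h5.eq_or_lt with h | h
  · linarith
  · nlinarith [h2, h1, h4, h]

lemma inner_pow_split (T : E →L[ℝ] E) (hT : T.IsPositive) (a b : ℕ) (u v : E) :
    ⟪u, (T ^ (a + b)) v⟫ = ⟪(T ^ a) u, (T ^ b) v⟫ := by
  rw [pow_add, ContinuousLinearMap.mul_apply, ← my_symm (hT.isSelfAdjoint.pow a)]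

lemma pow_succ_apply (T : E →L[ℝ] E) (m : ℕ) (y : E) :
    (T ^ (m + 1)) y = T ((T ^ m) y) := by
  rw [pow_succ', ContinuousLinearMap.mul_apply]

lemma inner_pow_odd (T : E →L[ℝ] E) (hT : T.IsPositive) (m : ℕ) (x : E) :
    ⟪x, (T ^ (m + m + 1)) x⟫ = ⟪(T ^ m) x, T ((T ^ m) x)⟫ := by
  have h : m + m + 1 = m + (m + 1) := by ring
  rw [h, inner_pow_split T hT m (m + 1), pow_succ_apply]

lemma inner_pow_even (T : E →L[ℝ] E) (hT : T.IsPositive) (m : ℕ) (x : E) :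
    ⟪x, (T ^ (m + m)) x⟫ = ‖(T ^ m) x‖ ^ 2 := by
  rw [inner_pow_split T hT m m, real_inner_self_eq_norm_sq]

lemma inner_pow_succ_le (T : E →L[ℝ] E) (hT : T.IsPositive) (hle : (1 - T).IsPositive)
    (x : E) (k : ℕ) : ⟪x, (T ^ (k + 1)) x⟫ ≤ ⟪x, (T ^ k) x⟫ := by
  rcases Nat.even_or_odd k with ⟨m, hm⟩ | ⟨m, hm⟩
  · subst hm
    rw [inner_pow_odd T hT m x, inner_pow_even T hT m x, ← real_inner_self_eq_norm_sq]
    exact le_one_inner hle ((T ^ m) x)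
  · have hm' : k = m + m + 1 := by omega
    subst hm'
    have h2 : m + m + 1 + 1 = (m + 1) + (m + 1) := by ring
    rw [h2, inner_pow_even T hT (m + 1) x, inner_pow_odd T hT m x, pow_succ_apply]
    exact norm_apply_sq_le T hT hle ((T ^ m) x)

lemma inner_pow_antitone (T : E →L[ℝ] E) (hT : T.IsPositive) (hle : (1 - T).IsPositive)
    (x : E) : Antitone (fun k : ℕ => ⟪x, (T ^ k) x⟫) :=
  antitone_nat_of_succ_le fun k => inner_pow_succ_le T hT hle x k

end Aux

/-- **Deterministic core of Lemma 2 (bias of the truncated geometric series).**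
Let `Cov` be a positive continuous linear operator on `ℓ²` with `Cov ≼ I`, let `M ≥ 0`,
let `β > 0`, and let `x, f ∈ ℓ²` with `‖f‖ ≤ 1`. Then
`|⟪x, (I - Cov) ^ (M+1) f⟫| ≤ β * ∑_{i=0}^M ⟪x, (I - Cov) ^ i x⟫ + 1 / (β * (M + 1))`. -/
theorem truncated_geometric_bias_bound
    (Cov : Hl2 →L[ℝ] Hl2) (hpos : Cov.IsPositive) (hle : (1 - Cov).IsPositive)
    (M : ℕ) (β : ℝ) (hβ : 0 < β)
    (x f : Hl2) (hf : ‖f‖ ≤ 1) :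
    |⟪x, ((1 - Cov) ^ (M + 1)) f⟫| ≤
      β * ∑ i ∈ Finset.range (M + 1), ⟪x, ((1 - Cov) ^ i) x⟫ + 1 / (β * ((M : ℝ) + 1)) := by
  set T : Hl2 →L[ℝ] Hl2 := 1 - Cov with hT_def
  have hT : T.IsPositive := hle
  have hle' : (1 - T).IsPositive := by
    rw [hT_def, sub_sub_cancel]; exact hpos
  set a : ℝ := ‖(T ^ (M + 1)) x‖ with ha_def
  have step1 : |⟪x, (T ^ (M + 1)) f⟫| ≤ a := by
    calc |⟪x, (T ^ (M + 1)) f⟫| = |⟪(T ^ (M + 1)) x, f⟫| := by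
          rw [my_symm (hT.isSelfAdjoint.pow (M + 1))]
      _ ≤ ‖(T ^ (M + 1)) x‖ * ‖f‖ := abs_real_inner_le_norm _ _
      _ ≤ a * 1 := mul_le_mul_of_nonneg_left hf (norm_nonneg _)
      _ = a := mul_one a
  have step2 : ∀ i ∈ Finset.range (M + 1), a ^ 2 ≤ ⟪x, (T ^ i) x⟫ := by
    intro i hi
    have hi' : i ≤ (M + 1) + (M + 1) := by
      have := Finset.mem_range.mp hi; omega
    have e : a ^ 2 = ⟪x, (T ^ ((M + 1) + (M + 1))) x⟫ :=
      (inner_pow_even T hT (M + 1) x).symm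
    rw [e]
    exact inner_pow_antitone T hT hle' x hi'
  have hsum : ((M : ℝ) + 1) * a ^ 2 ≤ ∑ i ∈ Finset.range (M + 1), ⟪x, (T ^ i) x⟫ := by
    have h := Finset.card_nsmul_le_sum (Finset.range (M + 1))
      (fun i => ⟪x, (T ^ i) x⟫) (a ^ 2) step2
    simpa [Finset.card_range, nsmul_eq_mul, add_comm] using h
  have hsum_nonneg : 0 ≤ ∑ i ∈ Finset.range (M + 1), ⟪x, (T ^ i) x⟫ :=
    Finset.sum_nonneg fun i hi => le_trans (sq_nonneg a) (step2 i hi)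
  have hc : 0 < β * ((M : ℝ) + 1) := by positivity
  have hamgm : a ≤ β * ((M : ℝ) + 1) * a ^ 2 / 2 + 1 / (2 * (β * ((M : ℝ) + 1))) := by
    rw [div_add_div _ _ (by norm_num) (by positivity), le_div_iff₀ (by positivity)]
    nlinarith [sq_nonneg (β * ((M : ℝ) + 1) * a - 1)]
  have final : a ≤ β * ∑ i ∈ Finset.range (M + 1), ⟪x, (T ^ i) x⟫ + 1 / (β * ((M : ℝ) + 1)) := by
    have h1 : β * (((M : ℝ) + 1) * a ^ 2) ≤ β * ∑ i ∈ Finset.range (M + 1), ⟪x, (T ^ i) x⟫ :=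
      mul_le_mul_of_nonneg_left hsum hβ.le
    have h2 : 1 / (2 * (β * ((M : ℝ) + 1))) ≤ 1 / (β * ((M : ℝ) + 1)) := by
      apply div_le_div_of_nonneg_left (by norm_num) hc
      linarith
    nlinarith [mul_nonneg hβ.le hsum_nonneg]
  exact step1.trans final
end

section
/- Let A be a finite set of K ≥ 1 actions, let T ≥ 1, let η > 0, and let c_1, …, c_T ∈ ℝ^A be arbitrary loss vectors. Let Δ(A) denote the probability simplex over A and define the log-barrier Ψ(p) = ∑_{a∈A} ln(1/p_a) for p with all coordinates positive. For each t ∈ {1, …, T}, let p_t ∈ Δ(A) be a minimizer over Δ(A) of p ↦ η·∑_{a∈A} p_a·∑_{τ=1}^{t} c_{τ,a} + Ψ(p) (any such minimizer has all coordinates positive). Then for every y ∈ Δ(A) with all coordinates positive: ∑_{t=1}^T ∑_{a∈A} (p_{t,a} − y_a)·c_{t,a} ≤ (Ψ(y) − Ψ(p_1))/η + η·∑_{t=1}^{T} ∑_{a∈A} p_{t,a}·c_{t,a}². -/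
/-- **Lemma 5 of the paper: FTRL with log-barrier regularization.**
Let `A = Fin K` be a set of `K ≥ 1` actions, `T ≥ 1`, `η > 0`, and let
`c 1, …, c T : Fin K → ℝ` be arbitrary loss vectors. With the log-barrier
`Ψ(p) = ∑ a, log (1 / p a)`, suppose that for each `t ∈ {1, …, T}`, the point `p t`
lies in the probability simplex, has all coordinates positive, and minimizes
`p ↦ η * ∑ a, p a * ∑_{τ=1}^t c τ a + Ψ(p)` over the simplex (any such minimizer has
all coordinates positive, so it suffices to minimize over positive points).
Then for every `y` in the simplex with all coordinates positive:
`∑_{t=1}^T ∑ a, (p t a - y a) * c t a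
  ≤ (Ψ(y) - Ψ(p 1)) / η + η * ∑_{t=1}^T ∑ a, p t a * (c t a) ^ 2`. -/
theorem ftrl_log_barrier_regret
    {K : ℕ} (hK : 1 ≤ K) (T : ℕ) (hT : 1 ≤ T) (η : ℝ) (hη : 0 < η)
    (c : ℕ → Fin K → ℝ) (p : ℕ → Fin K → ℝ)
    (hp_mem : ∀ t ∈ Finset.Icc 1 T, p t ∈ stdSimplex ℝ (Fin K))
    (hp_pos : ∀ t ∈ Finset.Icc 1 T, ∀ a, 0 < p t a)
    (hp_min : ∀ t ∈ Finset.Icc 1 T, ∀ q ∈ stdSimplex ℝ (Fin K), (∀ a, 0 < q a) →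
      η * ∑ a, p t a * ∑ τ ∈ Finset.Icc 1 t, c τ a + ∑ a, Real.log (1 / p t a) ≤
        η * ∑ a, q a * ∑ τ ∈ Finset.Icc 1 t, c τ a + ∑ a, Real.log (1 / q a))
    (y : Fin K → ℝ) (hy : y ∈ stdSimplex ℝ (Fin K)) (hy_pos : ∀ a, 0 < y a) :
    ∑ t ∈ Finset.Icc 1 T, ∑ a, (p t a - y a) * c t a ≤
      (∑ a, Real.log (1 / y a) - ∑ a, Real.log (1 / p 1 a)) / η +
        η * ∑ t ∈ Finset.Icc 1 T, ∑ a, p t a * (c t a) ^ 2 := by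
  classical
  set Ψ : (Fin K → ℝ) → ℝ := fun q => ∑ a, Real.log (1 / q a) with hΨ
  set G : ℕ → (Fin K → ℝ) → ℝ :=
    fun t q => η * ∑ a, q a * ∑ τ ∈ Finset.Icc 1 t, c τ a + Ψ q with hG
  have hmin : ∀ t ∈ Finset.Icc 1 T, ∀ q ∈ stdSimplex ℝ (Fin K), (∀ a, 0 < q a) →
      G t (p t) ≤ G t q := by
    intro t ht q hq hq_pos
    exact hp_min t ht q hq hq_pos
  have key : ∀ n, 1 ≤ n → n ≤ T →
      η * ∑ t ∈ Finset.Icc 1 n, ∑ a, p t a * c t a + Ψ (p 1) ≤ G n (p n) := by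
    intro n
    induction n with
    | zero => omega
    | succ m ih =>
      intro h1 h2
      rcases Nat.lt_or_ge 1 (m + 1) with h | h
      · -- m ≥ 1
        have hm1 : 1 ≤ m := by omega
        have hmT : m ≤ T := by omega
        have hstep := ih hm1 hmT
        have hmemT : m + 1 ∈ Finset.Icc 1 T := Finset.mem_Icc.mpr ⟨by omega, h2⟩
        have hopt : G m (p m) ≤ G m (p (m + 1)) :=
          hmin m (Finset.mem_Icc.mpr ⟨hm1, hmT⟩) (p (m + 1)) (hp_mem _ hmemT)
            (hp_pos _ hmemT)
        have hsum1 : ∑ t ∈ Finset.Icc 1 (m + 1), ∑ a, p t a * c t a =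
            (∑ t ∈ Finset.Icc 1 m, ∑ a, p t a * c t a) + ∑ a, p (m + 1) a * c (m + 1) a :=
          Finset.sum_Icc_succ_top (by omega) _
        have hsum2 : G (m + 1) (p (m + 1)) =
            G m (p (m + 1)) + η * ∑ a, p (m + 1) a * c (m + 1) a := by
          simp only [hG]
          have : ∀ a : Fin K, p (m+1) a * ∑ τ ∈ Finset.Icc 1 (m+1), c τ a =
              p (m+1) a * ∑ τ ∈ Finset.Icc 1 m, c τ a + p (m+1) a * c (m+1) a := by
            intro a
            rw [Finset.sum_Icc_succ_top (by omega : 1 ≤ m + 1), mul_add]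
          rw [Finset.sum_congr rfl fun a _ => this a, Finset.sum_add_distrib]
          ring
        rw [hsum1, hsum2]
        nlinarith [hstep, hopt]
      · -- m + 1 = 1
        have hm : m = 0 := by omega
        subst hm
        simp only [hG, Finset.Icc_self, Finset.sum_singleton]
        exact le_refl _
  have hmemT : T ∈ Finset.Icc 1 T := Finset.mem_Icc.mpr ⟨hT, le_rfl⟩
  have hfin : G T (p T) ≤ G T y := hmin T hmemT y hy hy_pos
  have hy_sum : ∑ t ∈ Finset.Icc 1 T, ∑ a, y a * c t a =
      ∑ a, y a * ∑ τ ∈ Finset.Icc 1 T, c τ a := by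
    rw [Finset.sum_comm]
    exact Finset.sum_congr rfl fun a _ => (Finset.mul_sum _ _ _).symm
  have hmain : η * ∑ t ∈ Finset.Icc 1 T, ∑ a, (p t a - y a) * c t a ≤ Ψ y - Ψ (p 1) := by
    have hsplit : ∑ t ∈ Finset.Icc 1 T, ∑ a, (p t a - y a) * c t a =
        (∑ t ∈ Finset.Icc 1 T, ∑ a, p t a * c t a)
          - ∑ t ∈ Finset.Icc 1 T, ∑ a, y a * c t a := by
      rw [← Finset.sum_sub_distrib]
      refine Finset.sum_congr rfl fun t _ => ?_
      rw [← Finset.sum_sub_distrib]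
      exact Finset.sum_congr rfl fun a _ => by ring
    have hk := key T hT le_rfl
    have hGTy : G T y = η * ∑ t ∈ Finset.Icc 1 T, ∑ a, y a * c t a + Ψ y := by
      simp only [hG, hy_sum]
    rw [hsplit]
    have := hfin
    rw [hGTy] at this
    nlinarith [hk, this]
  have hnonneg : 0 ≤ η * ∑ t ∈ Finset.Icc 1 T, ∑ a, p t a * (c t a) ^ 2 := by
    apply mul_nonneg hη.le
    apply Finset.sum_nonneg
    intro t ht
    apply Finset.sum_nonneg
    intro a _
    exact mul_nonneg (hp_pos t ht a).le (sq_nonneg _)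
  have hdiv : ∑ t ∈ Finset.Icc 1 T, ∑ a, (p t a - y a) * c t a ≤
      (∑ a, Real.log (1 / y a) - ∑ a, Real.log (1 / p 1 a)) / η := by
    rw [le_div_iff₀ hη]
    calc (∑ t ∈ Finset.Icc 1 T, ∑ a, (p t a - y a) * c t a) * η
        = η * ∑ t ∈ Finset.Icc 1 T, ∑ a, (p t a - y a) * c t a := by ring
      _ ≤ Ψ y - Ψ (p 1) := hmain
      _ = _ := rfl
  linarith
end
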